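/- arXiv:2510.26397 — 7 statements merged into one kernel-verified Lean document; each statement's English description precedes it below -/
import Mathlib

section
/- Let γ : ℝ≥0 → ℝ≥0 be a continuously differentiable class-K∞ function whose derivative γ' is also class-K∞. Then the Legendre–Fenchel transform ℓγ is itself a class-K∞ function. -/
/-!
Since `γ'` is strictly increasing with `γ' 0 = 0`, its inverse `δ` is monotone on `[0, ∞)` and
positive on `(0, ∞)`. The primitive of any such function is continuous, strictly increasing
(the integral over a nondegenerate interval is positive) and grows at least linearly, with
slope `δ 1`, beyond `1`.
-/

open Filter Set intervalIntegral

/-- A class-K∞ function, viewed as a function `ℝ → ℝ` restricted to `[0,∞)`. -/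
def ClassKInf (γ : ℝ → ℝ) : Prop :=
  ContinuousOn γ (Set.Ici 0) ∧ StrictMonoOn γ (Set.Ici 0) ∧ γ 0 = 0 ∧
    (∀ s, 0 ≤ s → 0 ≤ γ s) ∧ Filter.Tendsto γ Filter.atTop Filter.atTop

theorem StrictMonoOn.monotoneOn_of_leftInvOn {α β : Type*} [LinearOrder α] [Preorder β]
    {g : α → β} {f : β → α} {s : Set β} {t : Set α} (hg : StrictMonoOn g t)
    (hf : MapsTo f s t) (hinv : LeftInvOn g f s) : MonotoneOn f s :=
  fun _ ha _ hb hab => (hg.le_iff_le (hf ha) (hf hb)).1 (by rwa [hinv ha, hinv hb])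

section Primitive

variable {f : ℝ → ℝ}

theorem MonotoneOn.intervalIntegrable_of_Ici {a b c : ℝ} (hf : MonotoneOn f (Ici a))
    (hb : a ≤ b) (hc : a ≤ c) : IntervalIntegrable f MeasureTheory.volume b c :=
  (hf.mono fun _ hx => le_trans (le_min hb hc) hx.1).intervalIntegrable

theorem continuousOn_primitive_Ici
    (hf : ∀ b, 0 ≤ b → IntervalIntegrable f MeasureTheory.volume 0 b) :
    ContinuousOn (fun r => ∫ s in (0:ℝ)..r, f s) (Ici 0) := by
  refine continuousOn_of_locally_continuousOn fun x hx =>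
    ⟨Iio (x + 1), isOpen_Iio, lt_add_one x, ?_⟩
  have hx1 : (0:ℝ) ≤ x + 1 := by linarith [mem_Ici.1 hx]
  refine (continuousOn_primitive_interval' (hf _ hx1) left_mem_uIcc).mono ?_
  rintro y ⟨hy0, hy1⟩
  rw [uIcc_of_le hx1]
  exact ⟨hy0, le_of_lt hy1⟩

theorem MonotoneOn.sub_mul_le_integral {a b : ℝ} (hf : MonotoneOn f (Icc a b)) (hab : a ≤ b) :
    (b - a) * f a ≤ ∫ s in a..b, f s := by
  have hint : IntervalIntegrable f MeasureTheory.volume a b := by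
    refine MonotoneOn.intervalIntegrable ?_
    rwa [uIcc_of_le hab]
  simpa using integral_mono_on hab intervalIntegrable_const hint
    fun x hx => hf (left_mem_Icc.2 hab) hx hx.1

theorem classKInf_primitive (hmono : MonotoneOn f (Ici 0)) (hpos : ∀ s, 0 < s → 0 < f s) :
    ClassKInf (fun r => ∫ s in (0:ℝ)..r, f s) := by
  have hint {b c : ℝ} (hb : 0 ≤ b) (hc : 0 ≤ c) := hmono.intervalIntegrable_of_Ici hb hc
  have hpos_integral {a b : ℝ} (ha : 0 ≤ a) (hab : a < b) : 0 < ∫ s in a..b, f s :=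
    intervalIntegral_pos_of_pos_on (hint ha (ha.trans hab.le))
      (fun x hx => hpos x (ha.trans_lt hx.1)) hab
  refine ⟨continuousOn_primitive_Ici fun b hb => hint le_rfl hb, ?_, integral_same, ?_, ?_⟩
  · intro a ha b hb hab
    have hsub := integral_interval_sub_left (hint le_rfl hb) (hint le_rfl ha)
    linarith [hpos_integral ha hab]
  · intro s hs
    rcases hs.eq_or_lt with rfl | hs
    · simp
    · exact (hpos_integral le_rfl hs).le
  · have hlower : ∀ᶠ r in atTop, (r - 1) * f 1 ≤ ∫ s in (0:ℝ)..r, f s := by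
      filter_upwards [eventually_ge_atTop 1] with r hr
      have hsplit := integral_add_adjacent_intervals (hint le_rfl zero_le_one)
        (hint zero_le_one (zero_le_one.trans hr))
      have hslope := (hmono.mono fun x hx => zero_le_one.trans hx.1).sub_mul_le_integral hr
      linarith [hpos_integral le_rfl one_pos]
    exact tendsto_atTop_mono' atTop hlower
      ((tendsto_atTop_add_const_right _ (-1) tendsto_id).atTop_mul_const (hpos 1 one_pos))

end Primitive

theorem legendre_fenchel_classKInf_general
    (γ' δ : ℝ → ℝ)
    (hγ' : ClassKInf γ')
    (hδ_nonneg : ∀ s, 0 ≤ s → 0 ≤ δ s)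
    (hδ_left : ∀ s, 0 ≤ s → γ' (δ s) = s) :
    ClassKInf (fun r => ∫ s in (0:ℝ)..r, δ s) := by
  obtain ⟨-, hγ'_mono, hγ'_zero, -, -⟩ := hγ'
  have hδ_mono : MonotoneOn δ (Ici 0) :=
    hγ'_mono.monotoneOn_of_leftInvOn (fun s hs => hδ_nonneg s hs) fun s hs => hδ_left s hs
  have hδ_pos : ∀ s, 0 < s → 0 < δ s := fun s hs =>
    (hδ_nonneg s hs.le).lt_of_ne fun h => hs.ne (by rw [← hδ_left s hs.le, ← h, hγ'_zero])
  exact classKInf_primitive hδ_mono hδ_pos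

/-- The Legendre–Fenchel transform `ℓγ(r) = ∫₀^r (γ')⁻¹(s) ds` of a continuously
differentiable class-K∞ function with class-K∞ derivative is itself class-K∞. -/
theorem legendre_fenchel_classKInf
    (γ γ' δ : ℝ → ℝ)
    (hγ : ClassKInf γ)
    (hderiv : ∀ r, 0 ≤ r → HasDerivAt γ (γ' r) r)
    (hγ' : ClassKInf γ')
    (hδ_nonneg : ∀ s, 0 ≤ s → 0 ≤ δ s)
    (hδ_left : ∀ s, 0 ≤ s → γ' (δ s) = s)
    (hδ_right : ∀ s, 0 ≤ s → δ (γ' s) = s) :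
    ClassKInf (fun r => ∫ s in (0:ℝ)..r, δ s) :=
  legendre_fenchel_classKInf_general γ' δ hγ' hδ_nonneg hδ_left
end

section
/- Let S ⊆ ℝⁿ be closed with nonempty interior and complement, and let h : ℝⁿ → ℝ be continuous. If there exist extended class-K functions α₁, α₂ such that h(x)=0 on ∂S, α₁(dist(x, closure(ℝⁿ∖S))) ≤ h(x) ≤ α₂(dist(x, closure(ℝⁿ∖S))) for x ∈ interior(S), and α₂(−dist(x,S)) ≤ h(x) ≤ α₁(−dist(x,S)) for x ∉ S, then S = {x : h(x) ≥ 0}, ∂S = {x : h(x) = 0}, and interior(S) = {x : h(x) > 0}. -/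
open Filter Set Metric

/-- An extended class-K function: continuous, strictly increasing, vanishing at `0`. -/
def ExtClassK (α : ℝ → ℝ) : Prop :=
  Continuous α ∧ StrictMono α ∧ α 0 = 0

/-!
As `S` is closed, the space splits into `interior S`, `frontier S` and `Sᶜ`. The bound
`α₁ (dist x Sᶜ) ≤ h x` makes `h` positive on the interior, the bound `h x ≤ α₁ (-dist x S)`
makes it negative off `S`, and `h` vanishes on the frontier; so the sign of `h` tells the three
pieces apart.
-/

namespace ExtClassK

variable {α : ℝ → ℝ}

theorem pos_of_pos (hα : ExtClassK α) {t : ℝ} (ht : 0 < t) : 0 < α t :=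
  hα.2.2 ▸ hα.2.1 ht

theorem neg_of_neg (hα : ExtClassK α) {t : ℝ} (ht : t < 0) : α t < 0 :=
  hα.2.2 ▸ hα.2.1 ht

end ExtClassK

theorem Metric.infDist_closure_compl_pos_of_mem_interior {X : Type*} [PseudoMetricSpace X]
    {s : Set X} {x : X} (hs : sᶜ.Nonempty) (hx : x ∈ interior s) :
    0 < infDist x (closure sᶜ) := by
  rw [infDist_closure, ← infDist_pos_iff_notMem_closure hs, closure_compl]
  exact notMem_compl_iff.mpr hx

theorem IsClosed.level_sets_of_sign {X β : Type*} [TopologicalSpace X] [LinearOrder β] [Zero β]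
    {S : Set X} (hS : IsClosed S) {h : X → β}
    (hpos : ∀ x ∈ interior S, 0 < h x) (hzero : ∀ x ∈ frontier S, h x = 0)
    (hneg : ∀ x ∉ S, h x < 0) :
    S = {x | 0 ≤ h x} ∧ frontier S = {x | h x = 0} ∧ interior S = {x | 0 < h x} := by
  have hmem_frontier : ∀ x ∈ S, x ∉ interior S → x ∈ frontier S := fun x hxS hxi ↦
    hS.frontier_eq ▸ ⟨hxS, hxi⟩
  have hS_eq : S = {x | 0 ≤ h x} := by
    ext x
    refine ⟨fun hxS ↦ ?_, fun hx ↦ by_contra fun hxS ↦ (hneg x hxS).not_ge hx⟩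
    by_cases hxi : x ∈ interior S
    · exact (hpos x hxi).le
    · exact (hzero x (hmem_frontier x hxS hxi)).ge
  have hint_eq : interior S = {x | 0 < h x} := by
    ext x
    refine ⟨hpos x, fun hx ↦ by_contra fun hxi ↦ ?_⟩
    have hxS : x ∈ S := hS_eq ▸ hx.le
    exact hx.ne' (hzero x (hmem_frontier x hxS hxi))
  refine ⟨hS_eq, ?_, hint_eq⟩
  rw [hS.frontier_eq, hint_eq, hS_eq]
  ext x
  simp only [Set.mem_sdiff, mem_ofPred_eq, not_lt]
  exact and_comm.trans le_antisymm_iff.symm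

theorem barrier_candidate_level_sets_general
    (n : ℕ) (S : Set (EuclideanSpace ℝ (Fin n)))
    (hS_closed : IsClosed S)
    (hS_int : (interior S).Nonempty)
    (hS_compl : Sᶜ.Nonempty)
    (h : EuclideanSpace ℝ (Fin n) → ℝ)
    (α₁ α₂ : ℝ → ℝ)
    (hα₁ : ExtClassK α₁)
    (hbd : ∀ x ∈ frontier S, h x = 0)
    (hin : ∀ x ∈ interior S,
      α₁ (infDist x (closure Sᶜ)) ≤ h x ∧ h x ≤ α₂ (infDist x (closure Sᶜ)))
    (hout : ∀ x ∉ S, α₂ (-(infDist x S)) ≤ h x ∧ h x ≤ α₁ (-(infDist x S))) :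
    S = {x | 0 ≤ h x} ∧ frontier S = {x | h x = 0} ∧ interior S = {x | 0 < h x} := by
  refine hS_closed.level_sets_of_sign (fun x hx ↦ ?_) hbd (fun x hx ↦ ?_)
  · exact (hα₁.pos_of_pos (infDist_closure_compl_pos_of_mem_interior hS_compl hx)).trans_le
      (hin x hx).1
  · have hdist : 0 < infDist x S :=
      (hS_closed.notMem_iff_infDist_pos (hS_int.mono interior_subset)).mp hx
    exact (hout x hx).2.trans_lt (hα₁.neg_of_neg (neg_neg_of_pos hdist))

/-- If a continuous `h` vanishes on `∂S` and is sandwiched between extended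
class-K functions of the signed distance to the boundary of the closed set `S`,
then `S = {x : h(x) ≥ 0}`, `∂S = {x : h(x) = 0}` and `int S = {x : h(x) > 0}`. -/
theorem barrier_candidate_level_sets
    (n : ℕ) (S : Set (EuclideanSpace ℝ (Fin n)))
    (hS_closed : IsClosed S)
    (hS_int : (interior S).Nonempty)
    (hS_compl : Sᶜ.Nonempty)
    (h : EuclideanSpace ℝ (Fin n) → ℝ)
    (hcont : Continuous h)
    (α₁ α₂ : ℝ → ℝ)
    (hα₁ : ExtClassK α₁) (hα₂ : ExtClassK α₂)
    (hbd : ∀ x ∈ frontier S, h x = 0)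
    (hin : ∀ x ∈ interior S,
      α₁ (infDist x (closure Sᶜ)) ≤ h x ∧ h x ≤ α₂ (infDist x (closure Sᶜ)))
    (hout : ∀ x ∉ S, α₂ (-(infDist x S)) ≤ h x ∧ h x ≤ α₁ (-(infDist x S))) :
    S = {x | 0 ≤ h x} ∧ frontier S = {x | h x = 0} ∧ interior S = {x | 0 < h x} :=
  barrier_candidate_level_sets_general n S hS_closed hS_int hS_compl h α₁ α₂ hα₁ hbd hin hout
end

section
/- Let S = {x ∈ ℝ : x ≥ 0} and consider the scalar system ẋ = −x. There is no continuously differentiable function h : ℝ → ℝ satisfying the barrier-candidate sector bounds (h = 0 on ∂S, h sandwiched between extended class-K functions of the signed distance to the boundary) such that h'(x)·(−x) ≥ 0 for all x in an open set containing S. In other words, the safe system ẋ = −x admits no barrier certificate. -/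
open Filter Set

theorem ExtClassK.pos {α : ℝ → ℝ} (hα : ExtClassK α) {x : ℝ} (hx : 0 < x) : 0 < α x := by
  simpa only [hα.2.2] using hα.2.1 hx

theorem antitoneOn_Ici_of_deriv_mul_neg_nonneg {h : ℝ → ℝ} (hcont : ContinuousOn h (Ici 0))
    (hdiff : DifferentiableOn ℝ h (Ioi 0)) (hder : ∀ x, 0 < x → 0 ≤ deriv h x * (-x)) :
    AntitoneOn h (Ici 0) := by
  refine antitoneOn_of_deriv_nonpos (convex_Ici 0) hcont (by rwa [interior_Ici]) ?_
  rw [interior_Ici]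
  intro x (hx : 0 < x)
  nlinarith [hder x hx]

/-- The safe scalar system `ẋ = -x` with safe set `S = [0,∞)` admits no barrier
certificate: there is no continuously differentiable `h : ℝ → ℝ` vanishing at `0`
(the boundary of `S`), sandwiched between extended class-K functions of the signed
distance to the boundary, and satisfying `h'(x)·(−x) ≥ 0` on an open set containing `S`. -/
theorem no_barrier_certificate_for_safe_scalar_system :
    ¬ ∃ (h : ℝ → ℝ) (α₁ α₂ : ℝ → ℝ) (D : Set ℝ),
      ContDiff ℝ 1 h ∧
      ExtClassK α₁ ∧ ExtClassK α₂ ∧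
      h 0 = 0 ∧
      (∀ x : ℝ, 0 < x → α₁ x ≤ h x ∧ h x ≤ α₂ x) ∧
      (∀ x : ℝ, x < 0 → α₂ x ≤ h x ∧ h x ≤ α₁ x) ∧
      IsOpen D ∧ Set.Ici (0:ℝ) ⊆ D ∧
      (∀ x ∈ D, deriv h x * (-x) ≥ 0) := by
  rintro ⟨h, α₁, α₂, D, hC1, hα₁, -, h0, hbounds, -, -, hSD, hder⟩
  have hdiff : Differentiable ℝ h := hC1.differentiable one_ne_zero
  have hanti : AntitoneOn h (Ici 0) :=
    antitoneOn_Ici_of_deriv_mul_neg_nonneg hdiff.continuous.continuousOn hdiff.differentiableOn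
      fun x hx => hder x (hSD (le_of_lt hx))
  have hdecr : h 1 ≤ h 0 := hanti (mem_Ici.2 le_rfl) (mem_Ici.2 zero_le_one) zero_le_one
  linarith [(hbounds 1 one_pos).1, hα₁.pos one_pos]
end

section
/- Let ρ, α₁ ∈ class-K∞ and suppose h : ℝⁿ → ℝ satisfies α₁(−dist(x,S)) ≥ h(x) for x ∉ S (with α₁ extended class-K). If h(x) ≥ −η(‖w‖) for an extended class-K function η, then dist(x, S) ≤ ρ(‖w‖) where ρ(s) = −α₁⁻¹(−η(s)). Conversely, if α₂(−dist(x,S)) ≤ h(x) holds outside S and dist(x,S) ≤ ρ(‖w‖), then h(x) ≥ −η(‖w‖) with η(s) = −α₂(−ρ(s)). Hence the two ISSf-set descriptions S_w = {x : dist(x,S) ≤ ρ(‖w‖)} and S_w = {x : h(x) + η(‖w‖) ≥ 0} are equivalent. -/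
open Filter Set Metric

/-- A class-K function (on `[0,∞)`). -/
def ClassK (γ : ℝ → ℝ) : Prop :=
  ContinuousOn γ (Set.Ici 0) ∧ StrictMonoOn γ (Set.Ici 0) ∧ γ 0 = 0 ∧
    ∀ s, 0 ≤ s → 0 ≤ γ s

section SandwichBounds

variable {X : Type*} [PseudoMetricSpace X] {S : Set X} {h : X → ℝ} {α : ℝ → ℝ}

theorem neg_le_comp_neg_infDist_of_neg_le (hα0 : α 0 = 0)
    (hout : ∀ x ∉ S, h x ≤ α (-(infDist x S))) {c : ℝ} (hc : 0 ≤ c) {x : X}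
    (hx : -c ≤ h x) : -c ≤ α (-(infDist x S)) := by
  by_cases hxS : x ∈ S
  · rw [infDist_zero_of_mem hxS, neg_zero, hα0]
    linarith
  · exact hx.trans (hout x hxS)

theorem infDist_le_neg_inv_neg_of_neg_le (hα : StrictMono α) (hα0 : α 0 = 0)
    {αinv : ℝ → ℝ} (hinv : Function.RightInverse αinv α)
    (hout : ∀ x ∉ S, h x ≤ α (-(infDist x S))) {c : ℝ} (hc : 0 ≤ c) {x : X}
    (hx : -c ≤ h x) : infDist x S ≤ -αinv (-c) := by
  have hbound := neg_le_comp_neg_infDist_of_neg_le hα0 hout hc hx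
  have : αinv (-c) ≤ -infDist x S := hα.le_iff_le.mp (by rwa [hinv (-c)])
  linarith

theorem comp_neg_le_of_infDist_le (hα : Monotone α) {x : X}
    (hlow : α (-(infDist x S)) ≤ h x) {r : ℝ} (hr : infDist x S ≤ r) : α (-r) ≤ h x :=
  (hα (neg_le_neg hr)).trans hlow

end SandwichBounds

theorem issf_set_descriptions_equivalent_general
    (n : ℕ) (h : EuclideanSpace ℝ (Fin n) → ℝ)
    (S : Set (EuclideanSpace ℝ (Fin n)))
    (α₁ α₂ : ℝ → ℝ)
    (hα₁ : ExtClassK α₁) (hα₂ : ExtClassK α₂)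
    (hout : ∀ x ∉ S, α₂ (-(infDist x S)) ≤ h x ∧ h x ≤ α₁ (-(infDist x S)))
    (α₁inv : ℝ → ℝ)
    (hinv_right : Function.RightInverse α₁inv α₁) :
    (∀ (η : ℝ → ℝ), ClassK η →
      ∀ x, ∀ w : ℝ, 0 ≤ w → -(η w) ≤ h x →
        infDist x S ≤ -(α₁inv (-(η w)))) ∧
    (∀ (ρ : ℝ → ℝ), ClassK ρ →
      ∀ x, x ∉ S → ∀ w : ℝ, 0 ≤ w → infDist x S ≤ ρ w →
        -(-(α₂ (-(ρ w)))) ≤ h x) := by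
  obtain ⟨-, hα₁_mono, hα₁_zero⟩ := hα₁
  refine ⟨fun η hη x w hw hx => ?_, fun ρ _ x hxS w _ hd => ?_⟩
  · exact infDist_le_neg_inv_neg_of_neg_le hα₁_mono hα₁_zero hinv_right
      (fun y hy => (hout y hy).2) (hη.2.2.2 w hw) hx
  · rw [neg_neg]
    exact comp_neg_le_of_infDist_le hα₂.2.1.monotone (hout x hxS).1 hd

/-- Equivalence of the two ISSf-set descriptions
`S_w = {x : dist(x,S) ≤ ρ(‖w‖)}` and `S_w = {x : h(x) + η(‖w‖) ≥ 0}`: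
(1) if `h(x) ≥ −η(‖w‖)` then `dist(x,S) ≤ ρ(‖w‖)` with `ρ(s) = −α₁⁻¹(−η(s))`;
(2) conversely, if `dist(x,S) ≤ ρ(‖w‖)` for a class-K∞ `ρ`, then
`h(x) ≥ −η(‖w‖)` with `η(s) = −α₂(−ρ(s))`. -/
theorem issf_set_descriptions_equivalent
    (n : ℕ) (h : EuclideanSpace ℝ (Fin n) → ℝ)
    (S : Set (EuclideanSpace ℝ (Fin n)))
    (hS_def : S = {x | 0 ≤ h x})
    (α₁ α₂ : ℝ → ℝ)
    (hα₁ : ExtClassK α₁) (hα₂ : ExtClassK α₂)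
    (hout : ∀ x ∉ S, α₂ (-(infDist x S)) ≤ h x ∧ h x ≤ α₁ (-(infDist x S)))
    (α₁inv : ℝ → ℝ)
    (hinv_left : Function.LeftInverse α₁inv α₁)
    (hinv_right : Function.RightInverse α₁inv α₁) :
    (∀ (η : ℝ → ℝ), ClassK η →
      ∀ x, ∀ w : ℝ, 0 ≤ w → -(η w) ≤ h x →
        infDist x S ≤ -(α₁inv (-(η w)))) ∧
    (∀ (ρ : ℝ → ℝ), ClassK ρ →
      ∀ x, x ∉ S → ∀ w : ℝ, 0 ≤ w → infDist x S ≤ ρ w →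
        -(-(α₂ (-(ρ w)))) ≤ h x) :=
  issf_set_descriptions_equivalent_general n h S α₁ α₂ hα₁ hα₂ hout α₁inv hinv_right
end

section
/- Let γ : ℝ≥0 × ℝ≥0 → ℝ≥0 be continuous with γ(r,0)=0=γ(0,s) for all r,s, and such that r ↦ γ(r,s) and s ↦ γ(r,s) are class-K for each fixed positive value of the other argument. Then there exists a class-K function γ̃ such that γ(r,s) ≤ γ̃(r)·γ̃(s) for all r,s ≥ 0. -/
/-! Symmetrizing, it suffices to bound `f r s` for `r ≤ s`, where it is at most both
`f r (⌊s⌋ + 1)` and `f s s`. The countably many functions `t ↦ √(f t (n + 1))` are dominated,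
up to the constants `eⁿ`, by the single continuous nondecreasing function
`q = ∑ₙ e⁻ⁿ min 1 √(f · (n + 1))` (continuous by the M-test). An elementary inequality then gives
`f r s ≤ q r · eˢ (√(f s s) + f s s)`, and `κ t = t + q t + eᵗ (√(f t t) + f t t)` is class-K. -/

open Filter Set

open Real Function

def WeakClassK (γ : ℝ → ℝ) : Prop :=
  ContinuousOn γ (Ici 0) ∧ MonotoneOn γ (Ici 0) ∧ γ 0 = 0

namespace WeakClassK

variable {g h : ℝ → ℝ}

lemma nonneg (hg : WeakClassK g) {t : ℝ} (ht : 0 ≤ t) : 0 ≤ g t :=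
  hg.2.2 ▸ hg.2.1 self_mem_Ici ht ht

lemma add (hg : WeakClassK g) (hh : WeakClassK h) : WeakClassK (fun t => g t + h t) :=
  ⟨hg.1.add hh.1, hg.2.1.add hh.2.1, by simp [hg.2.2, hh.2.2]⟩

lemma sqrt (hg : WeakClassK g) : WeakClassK (fun t => √(g t)) :=
  ⟨hg.1.sqrt, fun _ ha _ hb hab => sqrt_le_sqrt (hg.2.1 ha hb hab), by simp [hg.2.2]⟩

lemma exp_mul (hg : WeakClassK g) : WeakClassK (fun t => exp t * g t) :=
  ⟨continuous_exp.continuousOn.mul hg.1,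
    exp_monotone.monotoneOn _ |>.mul hg.2.1 (fun _ _ => (exp_pos _).le) fun _ ht => hg.nonneg ht,
    by simp [hg.2.2]⟩

lemma classK_id_add (hg : WeakClassK g) : ClassK (fun t => t + g t) :=
  ⟨continuousOn_id.add hg.1, fun _ ha _ hb hab => add_lt_add_of_lt_of_le hab (hg.2.1 ha hb hab.le),
    by simp [hg.2.2], fun _ hs => add_nonneg hs (hg.nonneg hs)⟩

end WeakClassK

lemma monotoneOn_of_strictMonoOn_of_eq_zero {F : ℝ → ℝ → ℝ}
    (hF : ∀ c, 0 < c → StrictMonoOn (F c) (Ici 0)) (h0 : ∀ x, 0 ≤ x → F 0 x = 0)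
    {c : ℝ} (hc : 0 ≤ c) : MonotoneOn (F c) (Ici 0) := by
  rcases hc.eq_or_lt with rfl | hc
  · intro a ha b hb _
    rw [h0 a ha, h0 b hb]
  · exact (hF c hc).monotoneOn

lemma monotoneOn_uncurry_of_monotoneOn_slices {f : ℝ → ℝ → ℝ}
    (hleft : ∀ s, 0 ≤ s → MonotoneOn (fun r => f r s) (Ici 0))
    (hright : ∀ r, 0 ≤ r → MonotoneOn (f r) (Ici 0)) :
    MonotoneOn (uncurry f) (Ici 0 ×ˢ Ici 0) := by
  rintro ⟨r, s⟩ ⟨hr, hs⟩ ⟨r', s'⟩ ⟨hr', hs'⟩ ⟨hrr', hss'⟩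
  exact (hleft s hs hr hr' hrr').trans (hright r' hr' hs hs' hss')

lemma weakClassK_uncurry_comp {f : ℝ → ℝ → ℝ} {c : ℝ → ℝ}
    (hcont : ContinuousOn (uncurry f) (Ici 0 ×ˢ Ici 0))
    (hmono : MonotoneOn (uncurry f) (Ici 0 ×ˢ Ici 0)) (hzero : ∀ s, 0 ≤ s → f 0 s = 0)
    (hc_cont : ContinuousOn c (Ici 0)) (hc_mono : MonotoneOn c (Ici 0))
    (hc_maps : MapsTo c (Ici 0) (Ici 0)) :
    WeakClassK (fun t => f t (c t)) :=
  ⟨hcont.comp (continuousOn_id.prodMk hc_cont) fun _ ht => mk_mem_prod ht (hc_maps ht),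
    fun _ ha _ hb hab => hmono (mk_mem_prod ha (hc_maps ha)) (mk_mem_prod hb (hc_maps hb))
      (Prod.mk_le_mk.2 ⟨hab, hc_mono ha hb hab⟩),
    hzero _ (hc_maps self_mem_Ici)⟩

lemma exists_weakClassK_min_one_le_exp_mul {φ : ℕ → ℝ → ℝ} (hφ : ∀ n, WeakClassK (φ n)) :
    ∃ q, WeakClassK q ∧ ∀ n t, 0 ≤ t → min 1 (φ n t) ≤ exp n * q t := by
  set a : ℕ → ℝ → ℝ := fun n t => exp (-n) * min 1 (φ n t) with ha
  have ha_nonneg (n : ℕ) {t : ℝ} (ht : 0 ≤ t) : 0 ≤ a n t :=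
    mul_nonneg (exp_pos _).le (le_min zero_le_one ((hφ n).nonneg ht))
  have ha_le (n : ℕ) (t : ℝ) : a n t ≤ exp (-n) :=
    mul_le_of_le_one_right (exp_pos _).le (min_le_left _ _)
  have hsum {t : ℝ} (ht : 0 ≤ t) : Summable (a · t) :=
    summable_exp_neg_nat.of_nonneg_of_le (ha_nonneg · ht) (ha_le · t)
  refine ⟨fun t => ∑' n, a n t, ⟨?_, ?_, by simp [ha, (hφ _).2.2]⟩, fun n t ht => ?_⟩
  · have hcont (n : ℕ) : ContinuousOn (a n) (Ici 0) := by
      have := (hφ n).1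
      fun_prop
    refine continuousOn_tsum hcont summable_exp_neg_nat fun n t ht => ?_
    rw [norm_of_nonneg (ha_nonneg n ht)]
    exact ha_le n t
  · intro t ht t' ht' htt'
    refine (hsum ht).tsum_le_tsum (fun n => ?_) (hsum ht')
    exact mul_le_mul_of_nonneg_left (min_le_min_left 1 ((hφ n).2.1 ht ht' htt')) (exp_pos _).le
  · calc min 1 (φ n t) = exp n * a n t := by simp [ha, ← mul_assoc, ← exp_add]
      _ ≤ exp n * ∑' n, a n t :=
        mul_le_mul_of_nonneg_left ((hsum ht).le_tsum n fun j _ => ha_nonneg j ht) (exp_pos _).le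

lemma le_min_one_sqrt_mul {x y d : ℝ} (hx : 0 ≤ x) (hxy : x ≤ y) (hxd : x ≤ d) :
    x ≤ min 1 √y * (√d + d) := by
  have hxd' : √x ≤ √d := sqrt_le_sqrt hxd
  have key : √x ≤ min 1 √y * (1 + √d) := by
    rcases le_total 1 √y with h | h
    · rw [min_eq_left h]
      linarith
    · rw [min_eq_right h]
      nlinarith [sqrt_le_sqrt hxy, sqrt_nonneg d, sqrt_nonneg y]
  have hd : √d * √d = d := mul_self_sqrt (hx.trans hxd)
  calc x = √x * √x := (mul_self_sqrt hx).symm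
    _ ≤ min 1 √y * (1 + √d) * √d := mul_le_mul key hxd' (sqrt_nonneg _) (by positivity)
    _ = min 1 √y * (√d + d) := by linear_combination min 1 √y * hd

lemma exists_weakClassK_mul_bound_of_le {f : ℝ → ℝ → ℝ}
    (hcont : ContinuousOn (uncurry f) (Ici 0 ×ˢ Ici 0))
    (hmono : MonotoneOn (uncurry f) (Ici 0 ×ˢ Ici 0)) (hzero : ∀ s, 0 ≤ s → f 0 s = 0) :
    ∃ q H, WeakClassK q ∧ WeakClassK H ∧ ∀ r s, 0 ≤ r → r ≤ s → f r s ≤ q r * H s := by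
  have hslice (c : ℝ) (hc : 0 ≤ c) : WeakClassK (fun t => f t c) :=
    weakClassK_uncurry_comp hcont hmono hzero continuousOn_const monotoneOn_const fun _ _ => hc
  have hdiag : WeakClassK (fun t => f t t) :=
    weakClassK_uncurry_comp hcont hmono hzero continuousOn_id monotoneOn_id (mapsTo_id _)
  obtain ⟨q, hq, hq_le⟩ := exists_weakClassK_min_one_le_exp_mul (φ := fun n t => √(f t (n + 1)))
    fun n => (hslice _ (by positivity)).sqrt
  refine ⟨q, fun t => exp t * (√(f t t) + f t t), hq, (hdiag.sqrt.add hdiag).exp_mul,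
    fun r s hr hrs => ?_⟩
  have hs : 0 ≤ s := hr.trans hrs
  have hs_floor : s ≤ ⌊s⌋₊ + 1 := (Nat.lt_floor_add_one s).le
  have h_right : f r s ≤ f r (⌊s⌋₊ + 1) :=
    hmono (mk_mem_prod hr hs) (mk_mem_prod hr (hs.trans hs_floor))
      (Prod.mk_le_mk.2 ⟨le_rfl, hs_floor⟩)
  have h_diag : f r s ≤ f s s := hmono (mk_mem_prod hr hs) (mk_mem_prod hs hs)
    (Prod.mk_le_mk.2 ⟨hrs, le_rfl⟩)
  calc f r s ≤ min 1 √(f r (⌊s⌋₊ + 1)) * (√(f s s) + f s s) :=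
        le_min_one_sqrt_mul ((hslice s hs).nonneg hr) h_right h_diag
    _ ≤ exp ⌊s⌋₊ * q r * (√(f s s) + f s s) := by
        gcongr
        · exact add_nonneg (sqrt_nonneg _) (hdiag.nonneg hs)
        · exact hq_le _ r hr
    _ ≤ exp s * q r * (√(f s s) + f s s) := by
        gcongr
        · exact add_nonneg (sqrt_nonneg _) (hdiag.nonneg hs)
        · exact hq.nonneg hr
        · exact Nat.floor_le hs
    _ = q r * (exp s * (√(f s s) + f s s)) := by ring

lemma exists_classK_mul_bound {f : ℝ → ℝ → ℝ}
    (hcont : ContinuousOn (uncurry f) (Ici 0 ×ˢ Ici 0))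
    (hmono : MonotoneOn (uncurry f) (Ici 0 ×ˢ Ici 0))
    (hzero_right : ∀ r, 0 ≤ r → f r 0 = 0) (hzero_left : ∀ s, 0 ≤ s → f 0 s = 0) :
    ∃ κ, ClassK κ ∧ ∀ r s, 0 ≤ r → 0 ≤ s → f r s ≤ κ r * κ s := by
  have hmono_swap : MonotoneOn (uncurry f ∘ Prod.swap) (Ici 0 ×ˢ Ici 0) :=
    fun a ha b hb hab => hmono ⟨ha.2, ha.1⟩ ⟨hb.2, hb.1⟩ (Prod.swap_le_swap.2 hab)
  obtain ⟨q, H, hq, hH, hle⟩ := exists_weakClassK_mul_bound_of_le (f := fun r s => f r s + f s r)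
    (hcont.add (hcont.comp continuous_swap.continuousOn (mapsTo_swap_prod _ _)))
    (hmono.add hmono_swap) fun s hs => by simp [hzero_left s hs, hzero_right s hs]
  refine ⟨fun t => t + (q t + H t), (hq.add hH).classK_id_add, ?_⟩
  have hf_nonneg {r s : ℝ} (hr : 0 ≤ r) (hs : 0 ≤ s) : 0 ≤ f r s :=
    hzero_left s hs ▸ hmono (mk_mem_prod self_mem_Ici hs) (mk_mem_prod hr hs)
      (Prod.mk_le_mk.2 ⟨hr, le_rfl⟩)
  have hbound {r s : ℝ} (hr : 0 ≤ r) (hrs : r ≤ s) :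
      f r s + f s r ≤ (r + (q r + H r)) * (s + (q s + H s)) := by
    have hs := hr.trans hrs
    refine (hle r s hr hrs).trans (mul_le_mul ?_ ?_ (hH.nonneg hs) ?_) <;>
      linarith [hq.nonneg hr, hq.nonneg hs, hH.nonneg hr, hH.nonneg hs]
  intro r s hr hs
  rcases le_total r s with hrs | hsr
  · calc f r s ≤ f r s + f s r := le_add_of_nonneg_right (hf_nonneg hs hr)
      _ ≤ _ := hbound hr hrs
  · calc f r s ≤ f s r + f r s := le_add_of_nonneg_left (hf_nonneg hs hr)
      _ ≤ _ := hbound hs hsr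
      _ = _ := mul_comm _ _

theorem two_argument_classK_factorization_general
    (γ : ℝ → ℝ → ℝ)
    (hcont : ContinuousOn (fun p : ℝ × ℝ => γ p.1 p.2) (Set.Ici 0 ×ˢ Set.Ici 0))
    (hzero_right : ∀ r, 0 ≤ r → γ r 0 = 0)
    (hzero_left : ∀ s, 0 ≤ s → γ 0 s = 0)
    (hK_left : ∀ s, 0 < s → StrictMonoOn (fun r => γ r s) (Set.Ici 0))
    (hK_right : ∀ r, 0 < r → StrictMonoOn (fun s => γ r s) (Set.Ici 0)) :
    ∃ γ', ClassK γ' ∧ ∀ r s, 0 ≤ r → 0 ≤ s → γ r s ≤ γ' r * γ' s :=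
  exists_classK_mul_bound hcont
    (monotoneOn_uncurry_of_monotoneOn_slices
      (fun _ hs => monotoneOn_of_strictMonoOn_of_eq_zero (F := fun s r => γ r s) hK_left
        hzero_right hs)
      (fun _ hr => monotoneOn_of_strictMonoOn_of_eq_zero hK_right hzero_left hr))
    hzero_right hzero_left

/-- Factorization of a two-argument class-K function (Angeli–Sontag):
if `γ(r,s)` is continuous, vanishes whenever either argument is `0`, and is
class-K in each argument for each fixed positive value of the other, then
`γ(r,s) ≤ γ̃(r)·γ̃(s)` for some class-K function `γ̃`. -/
theorem two_argument_classK_factorization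
    (γ : ℝ → ℝ → ℝ)
    (hcont : ContinuousOn (fun p : ℝ × ℝ => γ p.1 p.2) (Set.Ici 0 ×ˢ Set.Ici 0))
    (hzero_right : ∀ r, 0 ≤ r → γ r 0 = 0)
    (hzero_left : ∀ s, 0 ≤ s → γ 0 s = 0)
    (hK_left : ∀ s, 0 < s → StrictMonoOn (fun r => γ r s) (Set.Ici 0))
    (hK_right : ∀ r, 0 < r → StrictMonoOn (fun s => γ r s) (Set.Ici 0))
    (hnonneg : ∀ r s, 0 ≤ r → 0 ≤ s → 0 ≤ γ r s) :
    ∃ γ', ClassK γ' ∧ ∀ r s, 0 ≤ r → 0 ≤ s → γ r s ≤ γ' r * γ' s :=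
  two_argument_classK_factorization_general γ hcont hzero_right hzero_left hK_left hK_right
end

section
/- Let h : ℝ → ℝ be continuously differentiable, α an extended class-K function, and suppose h'(x)·f(x) ≥ −α(h(x)) for all x in ℝ with −δ < h(x), where f is locally Lipschitz. If x(t) is a solution of ẋ = f(x) with h(x(0)) ≥ 0, then h(x(t)) ≥ 0 for all t ≥ 0 in the maximal interval of existence (scalar comparison/ZBF safety lemma). -/
open Filter Set

/- Proof idea: along a solution, `g = h ∘ x` satisfies `g' = h'(x)·f(x) ≥ -α(g) > 0` whenever
`g ∈ (-δ, 0)`. So `g` can never cross down through a level `-ε ∈ (-δ, 0)`, and letting `ε → 0`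
gives `g ≥ 0`. -/

theorem ExtClassK.apply_lt_zero {α : ℝ → ℝ} (hα : ExtClassK α) {y : ℝ} (hy : y < 0) :
    α y < 0 :=
  hα.2.2 ▸ hα.2.1 hy

theorem nonneg_of_hasDerivWithinAt_pos_of_mem_Ioo {g g' : ℝ → ℝ} {a b δ : ℝ} (hδ : 0 < δ)
    (hg : ContinuousOn g (Icc a b)) (hg' : ∀ t ∈ Ico a b, HasDerivWithinAt g (g' t) (Ici t) t)
    (ha : 0 ≤ g a) (hpos : ∀ t ∈ Ico a b, g t ∈ Ioo (-δ) 0 → 0 < g' t) :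
    ∀ t ∈ Icc a b, 0 ≤ g t := by
  have above_level : ∀ ε ∈ Ioo 0 δ, ∀ t ∈ Icc a b, -ε ≤ g t := fun ε ⟨hε0, hεδ⟩ =>
    image_le_of_deriv_right_lt_deriv_boundary' continuousOn_const
      (fun t _ => hasDerivWithinAt_const t _ (-ε)) (by linarith) hg hg'
      (fun t ht hgt => hpos t ht ⟨by linarith, by linarith⟩)
  intro t ht
  refine le_of_forall_sub_le fun ε hε => ?_
  have hmin : min ε (δ / 2) ∈ Ioo 0 δ :=
    ⟨lt_min hε (half_pos hδ), (min_le_right _ _).trans_lt (half_lt_self hδ)⟩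
  linarith [above_level _ hmin t ht, min_le_left ε (δ / 2)]

theorem zbf_implies_safety_general
    (h f : ℝ → ℝ) (α : ℝ → ℝ) (δ : ℝ)
    (hδ : 0 < δ)
    (hh : ContDiff ℝ 1 h)
    (hα : ExtClassK α)
    (hzbf : ∀ x : ℝ, -δ < h x → deriv h x * f x ≥ -α (h x))
    (T : ℝ)
    (x : ℝ → ℝ)
    (hsol : ∀ t ∈ Set.Icc 0 T, HasDerivAt x (f (x t)) t)
    (hinit : 0 ≤ h (x 0)) :
    ∀ t ∈ Set.Icc 0 T, 0 ≤ h (x t) := by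
  have hderiv : ∀ t ∈ Icc 0 T, HasDerivAt (h ∘ x) (deriv h (x t) * f (x t)) t := fun t ht =>
    (hh.differentiable one_ne_zero (x t)).hasDerivAt.comp t (hsol t ht)
  refine nonneg_of_hasDerivWithinAt_pos_of_mem_Ioo hδ
    (fun t ht => (hderiv t ht).continuousAt.continuousWithinAt)
    (fun t ht => (hderiv t (Ico_subset_Icc_self ht)).hasDerivWithinAt) hinit ?_
  rintro t - ⟨hlow, hneg⟩
  linarith [hzbf (x t) hlow, hα.apply_lt_zero hneg]

/-- ZBF safety lemma (scalar comparison, sufficiency direction):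
if `h` is `C¹`, `f` locally Lipschitz, and `h'(x)·f(x) ≥ −α(h(x))` whenever
`−δ < h(x)`, then any solution of `ẋ = f(x)` starting with `h(x(0)) ≥ 0`
satisfies `h(x(t)) ≥ 0` on its interval of existence `[0,T]`. -/
theorem zbf_implies_safety
    (h f : ℝ → ℝ) (α : ℝ → ℝ) (δ : ℝ)
    (hδ : 0 < δ)
    (hh : ContDiff ℝ 1 h)
    (hf : LocallyLipschitz f)
    (hα : ExtClassK α)
    (hzbf : ∀ x : ℝ, -δ < h x → deriv h x * f x ≥ -α (h x))
    (T : ℝ) (hT : 0 ≤ T)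
    (x : ℝ → ℝ)
    (hsol : ∀ t ∈ Set.Icc 0 T, HasDerivAt x (f (x t)) t)
    (hinit : 0 ≤ h (x 0)) :
    ∀ t ∈ Set.Icc 0 T, 0 ≤ h (x t) :=
  zbf_implies_safety_general h f α δ hδ hh hα hzbf T x hsol hinit
end

section
/- Under the HJI identity L_{f+g₂u₀}h + L_{g₂}h R̃⁻¹ (L_{g₂}h)ᵀ + l̃(x,u₀)/4 = 0 with l̃(x,u₀) = l(x,u₀) − 4max{L_f h, 0} − 4max{L_{g₂}h u₀, 0} and l(x,u₀) ≤ 4α(h(x)), the derivative of h along f + σg₂(u₀ + 2R̃⁻¹(L_{g₂}h)ᵀ) satisfies ḣ ≥ −2σα(h(x)) for every σ ≥ 1/2 and every x ∈ ℝⁿ. -/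
open Filter Set Matrix

/-- An extended class-K∞ function: continuous, strictly increasing, vanishing at `0`,
unbounded in both directions. -/
def ExtClassKInf (α : ℝ → ℝ) : Prop :=
  Continuous α ∧ StrictMono α ∧ α 0 = 0 ∧
    Filter.Tendsto α Filter.atTop Filter.atTop ∧
    Filter.Tendsto α Filter.atBot Filter.atBot

/-- With `A = L_f h`, `B = L_{g₂}h u₀`, `Q = L_{g₂}h R̃⁻¹ (L_{g₂}h)ᵀ`, the HJI identity turns
`ḣ = A + σ (B + 2 Q)` into `−(σ/2) l + (1 − 2σ)(A − A⁺) + A⁺ + σ (2 B⁺ − B)`, in which every term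
but the first is nonnegative once `σ ≥ 1/2`. -/
theorem neg_two_mul_le_of_hji {A B Q l a σ : ℝ} (hσ : 1 / 2 ≤ σ) (hl : l ≤ 4 * a)
    (hHJI : A + B + Q + (l - 4 * max A 0 - 4 * max B 0) / 4 = 0) :
    -(2 * σ) * a ≤ A + σ * (B + 2 * Q) := by
  have hA : (1 - 2 * σ) * (A - max A 0) ≥ 0 :=
    mul_nonneg_of_nonpos_of_nonpos (by linarith) (sub_nonpos.2 (le_max_left A 0))
  have hB : σ * (2 * max B 0 - B) ≥ σ * max B 0 := by
    gcongr
    linarith [le_max_left B 0]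
  calc -(2 * σ) * a ≤ -(σ / 2) * l + max A 0 + σ * max B 0 := by
        nlinarith [le_max_right A 0, le_max_right B 0]
    _ ≤ -(σ / 2) * l + (1 - 2 * σ) * (A - max A 0) + max A 0 + σ * (2 * max B 0 - B) := by
        linarith
    _ = A + σ * (B + 2 * Q) := by linear_combination (-2 * σ) * hHJI

theorem hji_improved_gain_margin_general
    {X : Type*} (m : ℕ)
    (h l Lfh : X → ℝ)
    (v u₀ : X → (Fin m → ℝ))          -- v x = (L_{g₂}h(x))ᵀ
    (α : ℝ → ℝ)
    (hl : ∀ x, l x ≤ 4 * α (h x))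
    -- the improved weight R̃⁻¹ and penalty l̃ :
    (Rtinv : X → Matrix (Fin m) (Fin m) ℝ)
    (ltil : X → ℝ)
    (hltil : ∀ x, ltil x = l x - 4 * max (Lfh x) 0 - 4 * max (v x ⬝ᵥ u₀ x) 0)
    (hHJI : ∀ x, Lfh x + v x ⬝ᵥ u₀ x + v x ⬝ᵥ (Rtinv x).mulVec (v x) + ltil x / 4 = 0) :
    ∀ σ : ℝ, 1/2 ≤ σ → ∀ x : X,
      Lfh x + σ * (v x ⬝ᵥ (u₀ x + 2 • (Rtinv x).mulVec (v x)))
        ≥ -(2 * σ) * α (h x) := by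
  intro σ hσ x
  rw [dotProduct_add, dotProduct_smul, nsmul_eq_mul, Nat.cast_ofNat]
  exact neg_two_mul_le_of_hji hσ (hl x) (hltil x ▸ hHJI x)

/-- Gain-margin improvement (pointwise inequality, eq. (75) of the paper).
With `Lfh x = L_f h(x)`, `v x = (L_{g₂}h(x))ᵀ`, `u₀` the nominal control,
`R̃(x,u₀)⁻¹ = R(x,u₀)⁻¹ + (max{L_f h,0} + max{L_{g₂}h u₀,0})/(L_{g₂}h (L_{g₂}h)ᵀ) · I`,
`l̃ = l − 4 max{L_f h,0} − 4 max{L_{g₂}h u₀,0}` and `l ≤ 4α(h)`, the HJI identity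
`L_{f+g₂u₀}h + L_{g₂}h R̃⁻¹ (L_{g₂}h)ᵀ + l̃/4 = 0` yields, for every `σ ≥ 1/2`,
`ḣ = L_f h + σ L_{g₂}h (u₀ + 2 R̃⁻¹ (L_{g₂}h)ᵀ) ≥ −2σ α(h(x))` at every point. -/
theorem hji_improved_gain_margin
    {X : Type*} (m : ℕ)
    (h l Lfh : X → ℝ)
    (v u₀ : X → (Fin m → ℝ))          -- v x = (L_{g₂}h(x))ᵀ
    (Rinv : X → Matrix (Fin m) (Fin m) ℝ)
    (α : ℝ → ℝ) (hα : ExtClassKInf α)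
    (hR_symm : ∀ x, (Rinv x).IsSymm)
    (hR_pos : ∀ x, (Rinv x).PosDef)
    (hl : ∀ x, l x ≤ 4 * α (h x))
    -- the improved weight R̃⁻¹ and penalty l̃ :
    (Rtinv : X → Matrix (Fin m) (Fin m) ℝ)
    (hRtinv : ∀ x, Rtinv x =
      Rinv x + ((max (Lfh x) 0 + max (v x ⬝ᵥ u₀ x) 0) / (v x ⬝ᵥ v x)) • (1 : Matrix (Fin m) (Fin m) ℝ))
    (ltil : X → ℝ)
    (hltil : ∀ x, ltil x = l x - 4 * max (Lfh x) 0 - 4 * max (v x ⬝ᵥ u₀ x) 0)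
    (hHJI : ∀ x, Lfh x + v x ⬝ᵥ u₀ x + v x ⬝ᵥ (Rtinv x).mulVec (v x) + ltil x / 4 = 0) :
    ∀ σ : ℝ, 1/2 ≤ σ → ∀ x : X,
      Lfh x + σ * (v x ⬝ᵥ (u₀ x + 2 • (Rtinv x).mulVec (v x)))
        ≥ -(2 * σ) * α (h x) :=
  hji_improved_gain_margin_general m h l Lfh v u₀ α hl Rtinv ltil hltil hHJI
end
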